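/- Let m11, m12, m21, m22, r11, r12, r21 be real numbers, let r* = max{r12, r21}, and suppose m11 > m22, r* > r11, and m12 + m21 > m11 + m22. Let ε = (m11 − m22)/(r* − r11), and define s_A = m11 + (2m11 + m12 + m21)/2 + 2εr11, s_B = m22 + (2m22 + m12 + m21)/2 + 2εr*, s_C = m12 + (2m21 + m11 + m22)/2 + ε(r* + r11), and s_D = m21 + (2m12 + m11 + m22)/2 + ε(r* + r11). Then s_A = s_B, s_C = s_D, and (s_C + s_D) − (s_A + s_B) = (m12 + m21) − (m11 + m22) > 0. -/
import Mathlib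

/-- The arithmetic identities behind Theorem 6: with `r* = max{r12, r21}` and
`ε = (m11 − m22)/(r* − r11)`, the quantities `s_A, s_B, s_C, s_D` satisfy
`s_A = s_B`, `s_C = s_D` and `(s_C + s_D) − (s_A + s_B) = (m12 + m21) − (m11 + m22) > 0`. -/
theorem thm6_arithmetic (m11 m12 m21 m22 r11 r12 r21 : ℝ)
    (h1 : m22 < m11)
    (h2 : r11 < max r12 r21)
    (h3 : m11 + m22 < m12 + m21) :
    let rstar := max r12 r21
    let ε := (m11 - m22) / (rstar - r11)
    let sA := m11 + (2 * m11 + m12 + m21) / 2 + 2 * ε * r11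
    let sB := m22 + (2 * m22 + m12 + m21) / 2 + 2 * ε * rstar
    let sC := m12 + (2 * m21 + m11 + m22) / 2 + ε * (rstar + r11)
    let sD := m21 + (2 * m12 + m11 + m22) / 2 + ε * (rstar + r11)
    sA = sB ∧ sC = sD ∧
      (sC + sD) - (sA + sB) = (m12 + m21) - (m11 + m22) ∧
      0 < (m12 + m21) - (m11 + m22) := by
  intro rstar ε sA sB sC sD
  have hne : rstar - r11 ≠ 0 := by
    have : r11 < rstar := h2
    linarith
  have hε : ε * (rstar - r11) = m11 - m22 := by
    simp only [ε]
    field_simp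
  refine ⟨?_, ?_, ?_, by linarith⟩
  · simp only [sA, sB]; nlinarith [hε]
  · simp only [sC, sD]; ring
  · simp only [sA, sB, sC, sD]; nlinarith [hε]
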